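/- For every n ∈ ℕ and every real number X, one has F_{n,q}′([X]_q) = β_{n,q}(X), where F_{n,q}′ denotes the (classical) derivative of the polynomial F_{n,q} and [X]_q = (q^X − 1)/(q − 1). -/

import Mathlib

open Polynomial Finset

/-- The `q`-analogue `[x]_q = (q^x - 1)/(q - 1)` (real exponent, via `rpow`). -/
noncomputable def qnum (q x : ℝ) : ℝ := (q ^ x - 1) / (q - 1)

/-- The `q`-antiderivative vanishing at `0` of a real polynomial:
`I_q(Σ a_k X^k) = Σ a_k X^(k+1) / [k+1]_q`. -/
noncomputable def Iq (q : ℝ) (P : Polynomial ℝ) : Polynomial ℝ :=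
  P.sum fun k a =>
    Polynomial.C (a / ((q ^ (k + 1) - 1) / (q - 1))) * Polynomial.X ^ (k + 1)

/-- Carlitz's `q`-polynomial
`β_{n,q}(x) = (q-1)^{-n} Σ_{k=0}^n (-1)^{n-k} C(n,k) ((k+1)/[k+1]_q) q^{kx}`. -/
noncomputable def carlitzBeta (q : ℝ) (n : ℕ) (x : ℝ) : ℝ :=
  ((q - 1) ^ n)⁻¹ * ∑ k ∈ Finset.range (n + 1),
    (-1 : ℝ) ^ (n - k) * (n.choose k : ℝ) *
      (((k : ℝ) + 1) / qnum q ((k : ℝ) + 1)) * q ^ ((k : ℝ) * x)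

/-- Explicit solution of the functional equation. -/
noncomputable def Fexp (q : ℝ) (n : ℕ) : Polynomial ℝ :=
  ∑ k ∈ Finset.range (n + 1),
    Polynomial.C ((-1 : ℝ) ^ (n - k) * (n.choose k : ℝ) / ((q - 1) ^ n * (q ^ (k + 1) - 1))) *
      ((Polynomial.C (q - 1) * Polynomial.X + 1) ^ (k + 1) - 1)

lemma qpow_ne_one {q : ℝ} (hq : 0 < q) (hq1 : q ≠ 1) (k : ℕ) :
    q ^ (k + 1) - 1 ≠ 0 := by
  rcases lt_or_gt_of_ne hq1 with h | h
  · have h2 : q ^ (k + 1) < 1 := pow_lt_one₀ (n := k + 1) hq.le h (by omega)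
    linarith
  · have h2 : 1 < q ^ (k + 1) := one_lt_pow₀ (n := k + 1) h (by omega)
    linarith

lemma comp_fixed_eq_zero {q : ℝ} (hq : 0 < q) (hq1 : q ≠ 1)
    {P : Polynomial ℝ} (hP : P.comp (Polynomial.C q * Polynomial.X + 1) = P)
    (h0 : P.eval 0 = 0) : P = 0 := by
  by_contra hne
  have hq0 : q ≠ 0 := hq.ne'
  rcases Nat.eq_zero_or_pos P.natDegree with hd | hd
  · have hc := Polynomial.eq_C_of_natDegree_eq_zero hd
    have hc0 : P.coeff 0 = 0 := by rw [hc] at h0; simpa using h0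
    exact hne (by rw [hc, hc0, map_zero])
  · have h1 : (Polynomial.C q * Polynomial.X + 1 : Polynomial ℝ)
        = Polynomial.C q * Polynomial.X + Polynomial.C 1 := by simp
    have hnd : (Polynomial.C q * Polynomial.X + 1 : Polynomial ℝ).natDegree = 1 := by
      rw [h1]; exact Polynomial.natDegree_linear hq0
    have hlc : (Polynomial.C q * Polynomial.X + 1 : Polynomial ℝ).leadingCoeff = q := by
      rw [h1]; exact Polynomial.leadingCoeff_linear hq0
    have := Polynomial.leadingCoeff_comp (p := P)
      (q := Polynomial.C q * Polynomial.X + 1) (by rw [hnd]; exact one_ne_zero)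
    rw [hP, hlc] at this
    have hlne : P.leadingCoeff ≠ 0 := Polynomial.leadingCoeff_ne_zero.mpr hne
    have hqd : q ^ P.natDegree = 1 := by
      have h' : P.leadingCoeff * 1 = P.leadingCoeff * q ^ P.natDegree := by
        rw [mul_one]; exact this
      exact (mul_left_cancel₀ hlne h').symm
    have : q ^ P.natDegree ≠ 1 := by
      have := qpow_ne_one hq hq1 (P.natDegree - 1)
      rw [Nat.sub_add_cancel hd] at this
      intro h; apply this; rw [h]; ring
    exact this hqd

lemma Fexp_eval (q : ℝ) (n : ℕ) (r : ℝ) :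
    (Fexp q n).eval r = ∑ k ∈ Finset.range (n + 1),
      (-1 : ℝ) ^ (n - k) * (n.choose k : ℝ) / ((q - 1) ^ n * (q ^ (k + 1) - 1)) *
        (((q - 1) * r + 1) ^ (k + 1) - 1) := by
  simp [Fexp, Polynomial.eval_finset_sum]

lemma Fexp_funeq (q : ℝ) (hq : 0 < q) (hq1 : q ≠ 1) (n : ℕ) :
    (Fexp q n).comp (Polynomial.C q * Polynomial.X + 1) - Fexp q n
      = Polynomial.C (q - 1) * Polynomial.X ^ (n + 1) + Polynomial.X ^ n := by
  have hq1' : q - 1 ≠ 0 := sub_ne_zero.mpr hq1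
  apply Polynomial.funext
  intro r
  rw [Polynomial.eval_sub, Polynomial.eval_comp]
  simp only [Polynomial.eval_add, Polynomial.eval_mul, Polynomial.eval_C, Polynomial.eval_X,
    Polynomial.eval_pow, Polynomial.eval_one]
  rw [Fexp_eval, Fexp_eval, ← Finset.sum_sub_distrib]
  set y : ℝ := (q - 1) * r + 1 with hy
  have hstep : ∀ k ∈ Finset.range (n + 1),
      (-1 : ℝ) ^ (n - k) * (n.choose k : ℝ) / ((q - 1) ^ n * (q ^ (k + 1) - 1)) *
          (((q - 1) * (q * r + 1) + 1) ^ (k + 1) - 1)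
        - (-1 : ℝ) ^ (n - k) * (n.choose k : ℝ) / ((q - 1) ^ n * (q ^ (k + 1) - 1)) *
          (y ^ (k + 1) - 1)
      = y ^ k * (-1 : ℝ) ^ (n - k) * (n.choose k : ℝ) * y / (q - 1) ^ n := by
    intro k _
    have hk := qpow_ne_one hq hq1 k
    have hyy : (q - 1) * (q * r + 1) + 1 = q * y := by rw [hy]; ring
    rw [hyy, mul_pow]
    field_simp
    ring
  rw [Finset.sum_congr rfl hstep]
  have hbin : ∑ k ∈ Finset.range (n + 1),
      y ^ k * (-1 : ℝ) ^ (n - k) * (n.choose k : ℝ) * y / (q - 1) ^ n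
      = (y + (-1)) ^ n * y / (q - 1) ^ n := by
    rw [add_pow]
    rw [Finset.sum_mul, Finset.sum_div]
  rw [hbin]
  have h2 : y + (-1) = (q - 1) * r := by rw [hy]; ring
  rw [h2, mul_pow, hy]
  field_simp
  ring

lemma Iq_eval_zero (q : ℝ) (B : Polynomial ℝ) : (Iq q B).eval 0 = 0 := by
  rw [Iq, Polynomial.eval_sum, Polynomial.sum]
  apply Finset.sum_eq_zero
  intro k _
  simp

/-- `F_{n,q}′([X]_q) = β_{n,q}(X)` for all real `X`. -/
theorem stmt_9 (q : ℝ) (hq : 0 < q) (hq1 : q ≠ 1) (n : ℕ) (B : Polynomial ℝ)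
    (hB : (Iq q B).comp (Polynomial.C q * Polynomial.X + 1) - Iq q B
      = Polynomial.C (q - 1) * Polynomial.X ^ (n + 1) + Polynomial.X ^ n)
    (x : ℝ) :
    (Iq q B).derivative.eval (qnum q x) = carlitzBeta q n x := by
  have hq1' : q - 1 ≠ 0 := sub_ne_zero.mpr hq1
  have hFe := Fexp_funeq q hq hq1 n
  have hH : (Iq q B - Fexp q n).comp (Polynomial.C q * Polynomial.X + 1)
      = Iq q B - Fexp q n := by
    rw [Polynomial.sub_comp]
    linear_combination hB - hFe
  have hH0 : (Iq q B - Fexp q n).eval 0 = 0 := by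
    rw [Polynomial.eval_sub, Iq_eval_zero, Fexp_eval]
    simp
  have hFeq : Iq q B = Fexp q n :=
    sub_eq_zero.mp (comp_fixed_eq_zero hq hq1 hH hH0)
  rw [hFeq]
  -- compute the derivative evaluation
  have hqx : (0:ℝ) < q ^ x := Real.rpow_pos_of_pos hq x
  have hY : (q - 1) * qnum q x + 1 = q ^ x := by
    rw [qnum]; field_simp; ring
  have hder : (Fexp q n).derivative.eval (qnum q x)
      = ∑ k ∈ Finset.range (n + 1),
        (-1 : ℝ) ^ (n - k) * (n.choose k : ℝ) / ((q - 1) ^ n * (q ^ (k + 1) - 1)) *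
          (((k : ℝ) + 1) * ((q : ℝ) ^ x) ^ k * (q - 1)) := by
    rw [Fexp, Polynomial.derivative_sum, Polynomial.eval_finset_sum]
    apply Finset.sum_congr rfl
    intro k _
    rw [Polynomial.derivative_C_mul, Polynomial.derivative_sub, Polynomial.derivative_one,
      sub_zero, Polynomial.derivative_pow]
    simp only [Nat.add_sub_cancel, Polynomial.derivative_add, Polynomial.derivative_one,
      Polynomial.derivative_C_mul, Polynomial.derivative_X, mul_one, add_zero]
    simp only [Polynomial.eval_mul, Polynomial.eval_C, Polynomial.eval_natCast,
      Polynomial.eval_pow, Polynomial.eval_add, Polynomial.eval_X, Polynomial.eval_one]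
    rw [hY]
    push_cast
    ring
  rw [hder, carlitzBeta, Finset.mul_sum]
  apply Finset.sum_congr rfl
  intro k hk
  have hk1 := qpow_ne_one hq hq1 k
  have hrp : q ^ ((k : ℝ) * x) = ((q : ℝ) ^ x) ^ k := by
    rw [mul_comm, Real.rpow_mul hq.le, Real.rpow_natCast]
  have hqk : qnum q ((k : ℝ) + 1) = (q ^ (k + 1) - 1) / (q - 1) := by
    rw [qnum]
    congr 1
    have : ((k : ℝ) + 1) = ((k + 1 : ℕ) : ℝ) := by push_cast; ring
    rw [this, Real.rpow_natCast]
  rw [hrp, hqk]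
  have hpn : ((q - 1) ^ n : ℝ) ≠ 0 := pow_ne_zero _ hq1'
  field_simp
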